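/- arXiv:2604.16204 — 2 statements merged into one kernel-verified Lean document; each statement's English description precedes it below -/
import Mathlib

section
/- The dual graph of the truncated cube is bipartite with parts of sizes 8 (triangles) and 6 (octagons), and since 8 - 6 = 2, it has no Hamiltonian path; therefore the truncated cube is non-peelable. -/
/-- The dual graph of the truncated cube `{3,8,8}` has 14
vertices (8 triangles and 6 octagons), and its 8 triangles form an independent
set of size 8; a graph on 14 vertices with an independent set of size 8 has no
Hamiltonian path (a Hamiltonian path on 14 vertices contains at most 7
vertices of an independent set); therefore the truncated cube is non-peelable
(no apple-peeling output — a nodup sequence of consecutively adjacent faces —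
can contain all faces). -/
theorem truncatedCube_nonpeelable {V : Type*} [Fintype V] [DecidableEq V]
    (G : SimpleGraph V) (hn : Fintype.card V = 14)
    (T : Finset V) (hT : T.card = 8)
    (hindep : ∀ u ∈ T, ∀ v ∈ T, ¬ G.Adj u v) :
    (¬ ∃ (u v : V) (p : G.Walk u v), p.IsPath ∧ ∀ x, x ∈ p.support) ∧
    (∀ L : List V, L.Chain' G.Adj → L.Nodup → ¬ (∀ x, x ∈ L)) := by
  have key : ∀ L : List V, L.Chain' G.Adj → L.Nodup → ¬ (∀ x, x ∈ L) := by
    intro L hchain hnodup hall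
    have hlen : L.length = 14 := by
      have h1 : L.toFinset = Finset.univ := by
        ext x; simp [hall x]
      have h2 := congrArg Finset.card h1
      rwa [List.toFinset_card_of_nodup hnodup, Finset.card_univ, hn] at h2
    have hget : ∀ i (h : i < L.length - 1),
        G.Adj (L.get ⟨i, by omega⟩) (L.get ⟨i + 1, by omega⟩) :=
      fun i h => List.isChain_iff_getElem.1 hchain i (by omega)
    have hcard : T.card ≤ (Finset.range 7).card := by
      apply Finset.card_le_card_of_injOn (fun x => L.idxOf x / 2)
      · intro x hx
        have hix : L.idxOf x < L.length := List.idxOf_lt_length_iff.2 (hall x)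
        simp only [Finset.mem_coe, Finset.mem_range]
        omega
      · intro u hu v hv h
        by_contra hne
        have hiu : L.idxOf u < L.length := List.idxOf_lt_length_iff.2 (hall u)
        have hiv : L.idxOf v < L.length := List.idxOf_lt_length_iff.2 (hall v)
        have hgu : L.get ⟨L.idxOf u, hiu⟩ = u := List.idxOf_get hiu
        have hgv : L.get ⟨L.idxOf v, hiv⟩ = v := List.idxOf_get hiv
        have hne' : L.idxOf u ≠ L.idxOf v := by
          intro h'
          apply hne
          rw [← hgu, ← hgv]
          congr 1
          exact Fin.ext h'
        simp only at h
        rcases (by omega : L.idxOf v = L.idxOf u + 1 ∨ L.idxOf u = L.idxOf v + 1) with h1 | h1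
        · have := hget (L.idxOf u) (by omega)
          rw [hgu] at this
          have h2 : L.get ⟨L.idxOf u + 1, by omega⟩ = v := by
            have he : (⟨L.idxOf u + 1, by omega⟩ : Fin L.length) = ⟨L.idxOf v, hiv⟩ :=
              Fin.ext h1.symm
            rw [he, hgv]
          rw [h2] at this
          exact hindep u hu v hv this
        · have := hget (L.idxOf v) (by omega)
          rw [hgv] at this
          have h2 : L.get ⟨L.idxOf v + 1, by omega⟩ = u := by
            have he : (⟨L.idxOf v + 1, by omega⟩ : Fin L.length) = ⟨L.idxOf u, hiu⟩ :=
              Fin.ext h1.symm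
            rw [he, hgu]
          rw [h2] at this
          exact hindep u hu v hv this.symm
    rw [hT, Finset.card_range] at hcard
    omega
  refine ⟨?_, key⟩
  rintro ⟨u, v, p, hp, hsup⟩
  exact key p.support p.isChain_adj_support hp.support_nodup hsup
end

section
/- The dual graph of the truncated dodecahedron has 32 vertices, of which the 20 triangles form an independent set; since 20 > ⌈32/2⌉ = 16, this dual graph has no Hamiltonian path, and hence the truncated dodecahedron is non-peelable. -/
private lemma countP_le_of_chain' {V : Type*} (P : V → Prop) [DecidablePred P] :
    ∀ L : List V, L.Chain' (fun a b => ¬ (P a ∧ P b)) →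
      L.countP (fun x => P x) ≤ (L.length + 1) / 2
  | [], _ => by simp
  | [a], _ => by
      by_cases h : P a <;> simp [List.countP, List.countP.go, h]
  | a :: b :: l, hc => by
      have h1 : ¬ (P a ∧ P b) := (List.isChain_cons_cons.mp hc).1
      have h2 : (b :: l).Chain' (fun a b => ¬ (P a ∧ P b)) := (List.isChain_cons_cons.mp hc).2
      have h3 : l.Chain' (fun a b => ¬ (P a ∧ P b)) := h2.tail
      have ih := countP_le_of_chain' P l h3
      have hab : (if P a then 1 else 0) + (if P b then 1 else 0) ≤ 1 := by
        by_cases ha : P a <;> by_cases hb : P b <;> simp [ha, hb] at h1 ⊢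
      have hcount : (a :: b :: l).countP (fun x => P x)
          = l.countP (fun x => P x) + ((if P a then 1 else 0) + (if P b then 1 else 0)) := by
        simp [List.countP_cons]
        by_cases ha : P a <;> by_cases hb : P b <;> simp [ha, hb]
      rw [hcount]
      have : l.countP (fun x => P x) + ((if P a then 1 else 0) + (if P b then 1 else 0))
          ≤ (l.length + 1) / 2 + 1 := by omega
      refine this.trans ?_
      simp only [List.length_cons]
      omega

private lemma key {V : Type*} [Fintype V] [DecidableEq V]
    (G : SimpleGraph V) (hn : Fintype.card V = 32)
    (T : Finset V) (hT : T.card = 20)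
    (hindep : ∀ u ∈ T, ∀ v ∈ T, ¬ G.Adj u v)
    (L : List V) (hc : L.Chain' G.Adj) (hnd : L.Nodup) (hall : ∀ x, x ∈ L) : False := by
  have hchain : L.Chain' (fun a b => ¬ (a ∈ T ∧ b ∈ T)) := by
    refine hc.imp ?_
    intro a b hab ⟨ha, hb⟩
    exact hindep a ha b hb hab
  have hbound := countP_le_of_chain' (fun x => x ∈ T) L hchain
  have hlen : L.length = 32 := by
    have : L.toFinset = Finset.univ := by
      ext x; simp [hall x]
    have := congrArg Finset.card this
    rw [List.toFinset_card_of_nodup hnd, Finset.card_univ, hn] at this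
    exact this
  -- T.card ≤ countP
  have hsub : T ⊆ (L.filter (fun x => decide (x ∈ T))).toFinset := by
    intro t ht
    simp [List.mem_filter, hall t, ht]
  have hF : (L.filter (fun x => decide (x ∈ T))).Nodup := hnd.filter _
  have hcard : T.card ≤ L.countP (fun x => decide (x ∈ T)) := by
    calc T.card ≤ (L.filter (fun x => decide (x ∈ T))).toFinset.card :=
          Finset.card_le_card hsub
      _ = (L.filter (fun x => decide (x ∈ T))).length := List.toFinset_card_of_nodup hF
      _ = L.countP (fun x => decide (x ∈ T)) := List.countP_eq_length_filter.symm
  rw [hT] at hcard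
  have : L.countP (fun x => decide (x ∈ T)) ≤ 16 := by
    have := hbound
    simp only [hlen] at this
    convert this using 2
  omega

/-- The dual graph of the truncated dodecahedron
`{3,10,10}` has 32 vertices, of which the 20 triangles form an independent
set; since `20 > ⌈32/2⌉ = 16`, this dual graph has no Hamiltonian path, and
hence the truncated dodecahedron is non-peelable (no apple-peeling output — a
nodup sequence of consecutively adjacent faces — can contain all faces). -/
theorem truncatedDodecahedron_nonpeelable {V : Type*} [Fintype V] [DecidableEq V]
    (G : SimpleGraph V) (hn : Fintype.card V = 32)
    (T : Finset V) (hT : T.card = 20)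
    (hindep : ∀ u ∈ T, ∀ v ∈ T, ¬ G.Adj u v) :
    ((32 + 1) / 2 = 16 ∧ 16 < 20) ∧
    (¬ ∃ (u v : V) (p : G.Walk u v), p.IsPath ∧ ∀ x, x ∈ p.support) ∧
    (∀ L : List V, L.Chain' G.Adj → L.Nodup → ¬ (∀ x, x ∈ L)) := by
  refine ⟨⟨by norm_num, by norm_num⟩, ?_, ?_⟩
  · rintro ⟨u, v, p, hp, hall⟩
    exact key G hn T hT hindep p.support p.isChain_adj_support hp.support_nodup hall
  · intro L hc hnd hall
    exact key G hn T hT hindep L hc hnd hall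
end
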